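/- For integers n ≥ 2, 0 ≤ d ≤ n and 1 ≤ k ≤ n-1, the number of signed permutations in 𝔅_n with d type B descents and first letter k satisfies the recurrence B_{n,d,k} = (2d+1)·B_{n-1,d,k} + (2(n-d-1)+1)·B_{n-1,d-1,k}, with the convention that B_{n-1,-1,k} = 0. -/

import Mathlib

open Finset Polynomial

/-- A signed permutation in the hyperoctahedral group `𝔅_n` is modelled by a permutation of
`Fin n` together with a sign vector.  `sval p i` is the value `π_i = π(i)` of the associated
bijection of `{-n,…,-1,1,…,n}` (with `π(-i) = -π(i)` and the convention `π_0 = 0`). -/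
def sval {n : ℕ} (p : Equiv.Perm (Fin n) × (Fin n → Bool)) (i : ℤ) : ℤ :=
  if h : 1 ≤ i ∧ i ≤ (n : ℤ) then
    (if p.2 ⟨(i - 1).toNat, by omega⟩ then -1 else 1) *
      (((p.1 ⟨(i - 1).toNat, by omega⟩ : Fin n) : ℕ) + 1)
  else if h' : 1 ≤ -i ∧ -i ≤ (n : ℤ) then
    -((if p.2 ⟨(-i - 1).toNat, by omega⟩ then -1 else 1) *
      (((p.1 ⟨(-i - 1).toNat, by omega⟩ : Fin n) : ℕ) + 1))
  else 0

/-- The type B descent number `des_B(π) = |{i ∈ {0,…,n-1} : π_i > π_{i+1}}|` (with `π_0 = 0`). -/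
def desB {n : ℕ} (p : Equiv.Perm (Fin n) × (Fin n → Bool)) : ℕ :=
  (Finset.univ.filter (fun i : Fin n =>
    sval p (((i : ℕ) : ℤ) + 1) < sval p ((i : ℕ) : ℤ))).card

/-- The type B excedance number
`exc_B(π) = |{i ∈ [n] : π(|π(i)|) > π(i) or π(i) = -i}|`. -/
def excB {n : ℕ} (p : Equiv.Perm (Fin n) × (Fin n → Bool)) : ℕ :=
  (Finset.univ.filter (fun i : Fin n =>
    sval p (((i : ℕ) : ℤ) + 1) < sval p |sval p (((i : ℕ) : ℤ) + 1)| ∨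
      sval p (((i : ℕ) : ℤ) + 1) = -(((i : ℕ) : ℤ) + 1))).card

/-- The restricted type B Eulerian polynomial `B_{n,k}(t) = ∑_{π ∈ 𝔅_n, π_1 = k} t^{des_B(π)}`. -/
noncomputable def Bpoly (n : ℕ) (k : ℤ) : Polynomial ℚ :=
  ∑ p ∈ Finset.univ.filter
      (fun p : Equiv.Perm (Fin n) × (Fin n → Bool) => sval p 1 = k),
    Polynomial.X ^ desB p

/-- `BE_{n,k}(t) = ∑_{π ∈ 𝔅_n, π_1 = k} t^{exc_B(π)}`. -/
noncomputable def BEpoly (n : ℕ) (k : ℤ) : Polynomial ℚ :=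
  ∑ p ∈ Finset.univ.filter
      (fun p : Equiv.Perm (Fin n) × (Fin n → Bool) => sval p 1 = k),
    Polynomial.X ^ excB p

/-- `B_{n,d,k}`: the number of signed permutations in `𝔅_n` with `d` type B descents and
first letter `k`. -/
def Bcount (n : ℕ) (d : ℕ) (k : ℤ) : ℕ :=
  (Finset.univ.filter (fun p : Equiv.Perm (Fin n) × (Fin n → Bool) =>
    desB p = d ∧ sval p 1 = k)).card

abbrev SP (n : ℕ) := Equiv.Perm (Fin n) × (Fin n → Bool)

lemma sval_zero {n : ℕ} (p : SP n) : sval p 0 = 0 := by simp [sval]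


lemma sval_nat {n : ℕ} (p : SP n) (t : ℕ) (i : Fin n) (h1 : 1 ≤ t) (hi : (i : ℕ) = t - 1) :
    sval p (t : ℤ) = (if p.2 i then -1 else 1) * ((p.1 i : ℕ) + 1) := by
  have h2 : t ≤ n := by have := i.isLt; omega
  simp only [sval]
  rw [dif_pos (show (1:ℤ) ≤ (t:ℤ) ∧ (t:ℤ) ≤ n by
    constructor <;> [exact_mod_cast h1; exact_mod_cast h2])]
  have hv : ((t : ℤ) - 1).toNat = (i : ℕ) := by omega
  have hf : ∀ (h : ((t : ℤ) - 1).toNat < n), (⟨((t:ℤ) - 1).toNat, h⟩ : Fin n) = i :=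
    fun h => Fin.ext hv
  simp only [hf]

lemma sval_abs_le {n : ℕ} (p : SP n) (t : ℤ) : |sval p t| ≤ n := by
  unfold sval
  by_cases h : 1 ≤ t ∧ t ≤ (n:ℤ)
  · rw [dif_pos h]
    set x : Fin n := ⟨(t-1).toNat, by omega⟩ with hx
    have hb : ((p.1 x : ℕ) : ℤ) < n := by exact_mod_cast (p.1 x).isLt
    split_ifs <;> simp [abs_le] <;> omega
  · rw [dif_neg h]
    by_cases h2 : 1 ≤ -t ∧ -t ≤ (n:ℤ)
    · rw [dif_pos h2]
      set x : Fin n := ⟨(-t-1).toNat, by omega⟩ with hx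
      have hb : ((p.1 x : ℕ) : ℤ) < n := by exact_mod_cast (p.1 x).isLt
      split_ifs <;> simp [abs_le] <;> omega
    · rw [dif_neg h2]; simp

lemma desB_eq_sum {n : ℕ} (p : SP n) :
    desB p = ∑ t ∈ Finset.range n, (if sval p ((t:ℤ) + 1) < sval p (t:ℤ) then 1 else 0) := by
  rw [desB, Finset.card_filter]
  exact Fin.sum_univ_eq_sum_range (fun t => if sval p ((t:ℤ)+1) < sval p (t:ℤ) then 1 else 0) n

def insPerm {m : ℕ} (p : Fin (m+1)) (σ : Equiv.Perm (Fin m)) : Equiv.Perm (Fin (m+1)) :=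
  (finSuccEquiv' p).trans (σ.optionCongr.trans (finSuccEquiv' (Fin.last m)).symm)

@[simp] lemma insPerm_self {m : ℕ} (p : Fin (m+1)) (σ : Equiv.Perm (Fin m)) :
    insPerm p σ p = Fin.last m := by
  simp [insPerm, finSuccEquiv'_at, finSuccEquiv'_symm_none]

@[simp] lemma insPerm_succAbove {m : ℕ} (p : Fin (m+1)) (σ : Equiv.Perm (Fin m)) (i : Fin m) :
    insPerm p σ (p.succAbove i) = (σ i).castSucc := by
  simp [insPerm, finSuccEquiv'_succAbove, finSuccEquiv'_symm_some, Fin.succAbove_last]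

def Phi {m : ℕ} (x : SP m × Fin m × Bool) : SP (m+1) :=
  (insPerm x.2.1.succ x.1.1, (x.2.1.succ).insertNth x.2.2 x.1.2)

lemma sval_phi {m : ℕ} (q : SP m) (j : Fin m) (s : Bool) (t : ℕ) (ht : t ≤ m + 1) :
    sval (Phi (q, j, s)) (t : ℤ) =
      if t = (j:ℕ) + 2 then (if s then -((m:ℤ)+1) else (m:ℤ)+1)
      else if t < (j:ℕ) + 2 then sval q (t:ℤ) else sval q ((t:ℤ) - 1) := by
  have hj := j.isLt
  rcases Nat.eq_zero_or_pos t with rfl | ht1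
  · simp only [if_neg (by omega : ¬ (0 : ℕ) = (j:ℕ)+2), if_pos (by omega : 0 < (j:ℕ)+2)]
    push_cast
    rw [sval_zero, sval_zero]
  rcases eq_or_ne t ((j:ℕ)+2) with rfl | hne
  · rw [if_pos rfl]
    rw [sval_nat (Phi (q,j,s)) _ j.succ (by omega) (by simp)]
    have hτ : (Phi (q,j,s)).1 j.succ = Fin.last m := insPerm_self _ _
    have hε : (Phi (q,j,s)).2 j.succ = s := Fin.insertNth_apply_same (α := fun _ => Bool) j.succ s q.2
    rw [hτ, hε]
    cases s <;> simp [Fin.last] <;> ring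
  rw [if_neg hne]
  rcases lt_or_gt_of_ne hne with hlt | hgt
  · rw [if_pos hlt]
    set i0 : Fin m := ⟨t - 1, by omega⟩ with hi0
    have hsA : j.succ.succAbove i0 = Fin.castSucc i0 :=
      Fin.succAbove_of_castSucc_lt _ _ (by simp [Fin.lt_def, hi0]; omega)
    have hτ : (Phi (q,j,s)).1 (Fin.castSucc i0) = Fin.castSucc (q.1 i0) := by
      rw [← hsA]; exact insPerm_succAbove _ _ _
    have hε : (Phi (q,j,s)).2 (Fin.castSucc i0) = q.2 i0 := by
      rw [← hsA]; exact Fin.insertNth_apply_succAbove (α := fun _ => Bool) j.succ s q.2 i0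
    rw [sval_nat (Phi (q,j,s)) t (Fin.castSucc i0) (by omega) (by simp [hi0]),
        hτ, hε, sval_nat q t i0 (by omega) (by simp [hi0])]
    simp
  · rw [if_neg (by omega)]
    set i0 : Fin m := ⟨t - 2, by omega⟩ with hi0
    have hsA : j.succ.succAbove i0 = i0.succ :=
      Fin.succAbove_of_le_castSucc _ _ (by simp [Fin.le_def, hi0]; omega)
    have hτ : (Phi (q,j,s)).1 i0.succ = Fin.castSucc (q.1 i0) := by
      rw [← hsA]; exact insPerm_succAbove _ _ _
    have hε : (Phi (q,j,s)).2 i0.succ = q.2 i0 := by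
      rw [← hsA]; exact Fin.insertNth_apply_succAbove (α := fun _ => Bool) j.succ s q.2 i0
    have hc : (t:ℤ) - 1 = ((t - 1 : ℕ) : ℤ) := by omega
    rw [sval_nat (Phi (q,j,s)) t i0.succ (by omega) (by simp [hi0]; omega),
        hτ, hε, hc, sval_nat q (t-1) i0 (by omega) (by simp [hi0]; omega)]
    simp


lemma sval_phi_lt {m : ℕ} (q : SP m) (j : Fin m) (s : Bool) (t : ℕ) (ht : t ≤ m + 1)
    (h : t < (j:ℕ) + 2) : sval (Phi (q, j, s)) (t:ℤ) = sval q (t:ℤ) := by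
  rw [sval_phi q j s t ht, if_neg (show ¬ t = (j:ℕ)+2 by omega), if_pos h]

lemma sval_phi_eq {m : ℕ} (q : SP m) (j : Fin m) (s : Bool) :
    sval (Phi (q, j, s)) (((j:ℕ) + 2 : ℕ) : ℤ) = if s then -((m:ℤ)+1) else (m:ℤ)+1 := by
  have := j.isLt
  rw [sval_phi q j s ((j:ℕ)+2) (by omega), if_pos rfl]

lemma sval_phi_gt {m : ℕ} (q : SP m) (j : Fin m) (s : Bool) (t : ℕ) (ht : t ≤ m + 1)
    (h : (j:ℕ) + 2 < t) : sval (Phi (q, j, s)) (t:ℤ) = sval q ((t:ℤ) - 1) := by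
  rw [sval_phi q j s t ht, if_neg (show ¬ t = (j:ℕ)+2 by omega),
      if_neg (show ¬ t < (j:ℕ)+2 by omega)]

def dstep {m : ℕ} (q : SP m) (t : ℕ) : ℕ :=
  if sval q (((t+1:ℕ)):ℤ) < sval q ((t:ℕ):ℤ) then 1 else 0

lemma desB_eq_sum' {m : ℕ} (q : SP m) : desB q = ∑ t ∈ Finset.range m, dstep q t := by
  rw [desB_eq_sum q]
  refine Finset.sum_congr rfl (fun t _ => ?_)
  unfold dstep
  rw [show ((t+1:ℕ):ℤ) = (t:ℤ)+1 by push_cast; ring]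

def delta {m : ℕ} (q : SP m) (j : Fin m) (s : Bool) : ℕ :=
  if (j:ℕ) + 2 ≤ m then 1 - dstep q ((j:ℕ)+1) else (if s then 1 else 0)

lemma dstep_le {m : ℕ} (q : SP m) (t : ℕ) : dstep q t ≤ 1 := by
  unfold dstep; split <;> omega

lemma desB_phi {m : ℕ} (q : SP m) (j : Fin m) (s : Bool) :
    desB (Phi (q, j, s)) = desB q + delta q j s := by
  have hj := j.isLt
  have habs : ∀ t : ℤ, |sval q t| ≤ m := sval_abs_le q
  have hF1 : ∀ t, t ≤ (j:ℕ) → dstep (Phi (q,j,s)) t = dstep q t := by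
    intro t ht
    unfold dstep
    rw [sval_phi_lt q j s (t+1) (by omega) (by omega), sval_phi_lt q j s t (by omega) (by omega)]
  have hF2 : dstep (Phi (q,j,s)) ((j:ℕ)+1) = if s then 1 else 0 := by
    unfold dstep
    rw [show (j:ℕ)+1+1 = (j:ℕ)+2 from rfl, sval_phi_eq q j s,
        sval_phi_lt q j s ((j:ℕ)+1) (by omega) (by omega)]
    have h1 := habs ((((j:ℕ)+1 : ℕ)):ℤ)
    rw [abs_le] at h1
    cases s <;> norm_num <;> push_cast at h1 ⊢ <;> omega
  have hF3 : (j:ℕ) + 2 ≤ m → dstep (Phi (q,j,s)) ((j:ℕ)+2) = if s then 0 else 1 := by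
    intro h
    unfold dstep
    rw [show (j:ℕ)+2+1 = (j:ℕ)+3 from rfl, sval_phi_gt q j s ((j:ℕ)+3) (by omega) (by omega),
        sval_phi_eq q j s]
    have h1 := habs (((((j:ℕ)+3 : ℕ)):ℤ) - 1)
    rw [abs_le] at h1
    cases s <;> norm_num <;> push_cast at h1 ⊢ <;> omega
  have hF4 : ∀ t, (j:ℕ) + 2 < t → t ≤ m → dstep (Phi (q,j,s)) t = dstep q (t-1) := by
    intro t h1 h2
    unfold dstep
    rw [sval_phi_gt q j s (t+1) (by omega) (by omega), sval_phi_gt q j s t (by omega) (by omega)]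
    have e2 : ((t+1:ℕ):ℤ) - 1 = (((t-1+1:ℕ)):ℤ) := by push_cast; omega
    have e3 : ((t:ℕ):ℤ) - 1 = (((t-1:ℕ)):ℤ) := by push_cast; omega
    rw [e2, e3]
  rw [desB_eq_sum' (Phi (q,j,s)), desB_eq_sum' q]
  have split1 : ∑ t ∈ Finset.range (m+1), dstep (Phi (q,j,s)) t
      = (∑ t ∈ Finset.range ((j:ℕ)+1), dstep (Phi (q,j,s)) t)
        + ∑ t ∈ Finset.Ico ((j:ℕ)+1) (m+1), dstep (Phi (q,j,s)) t := by
    rw [Finset.range_eq_Ico, ← Finset.sum_Ico_consecutive _ (Nat.zero_le ((j:ℕ)+1)) (by omega)]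
    rw [Finset.range_eq_Ico]
  have e1 : ∑ t ∈ Finset.range ((j:ℕ)+1), dstep (Phi (q,j,s)) t
      = ∑ t ∈ Finset.range ((j:ℕ)+1), dstep q t :=
    Finset.sum_congr rfl (fun t ht => hF1 t (by simp only [Finset.mem_range] at ht; omega))
  have e2 : ∑ t ∈ Finset.Ico ((j:ℕ)+1) (m+1), dstep (Phi (q,j,s)) t
      = dstep (Phi (q,j,s)) ((j:ℕ)+1) + ∑ t ∈ Finset.Ico ((j:ℕ)+2) (m+1), dstep (Phi (q,j,s)) t :=
    Finset.sum_eq_sum_Ico_succ_bot (by omega) _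
  by_cases hc : (j:ℕ) + 2 ≤ m
  · have e3 : ∑ t ∈ Finset.Ico ((j:ℕ)+2) (m+1), dstep (Phi (q,j,s)) t
        = dstep (Phi (q,j,s)) ((j:ℕ)+2) + ∑ t ∈ Finset.Ico ((j:ℕ)+3) (m+1), dstep (Phi (q,j,s)) t :=
      Finset.sum_eq_sum_Ico_succ_bot (by omega) _
    have e4 : ∑ t ∈ Finset.Ico ((j:ℕ)+3) (m+1), dstep (Phi (q,j,s)) t
        = ∑ t ∈ Finset.Ico ((j:ℕ)+2) m, dstep q t := by
      rw [Finset.sum_Ico_eq_sum_range, Finset.sum_Ico_eq_sum_range]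
      rw [show m + 1 - ((j:ℕ)+3) = m - ((j:ℕ)+2) by omega]
      refine Finset.sum_congr rfl (fun i hi => ?_)
      simp only [Finset.mem_range] at hi
      rw [show (j:ℕ) + 3 + i = ((j:ℕ) + 2 + i) + 1 by omega,
          hF4 ((j:ℕ)+2+i+1) (by omega) (by omega)]
      simp
    have rhs : ∑ t ∈ Finset.range m, dstep q t
        = (∑ t ∈ Finset.range ((j:ℕ)+1), dstep q t) + (dstep q ((j:ℕ)+1)
            + ∑ t ∈ Finset.Ico ((j:ℕ)+2) m, dstep q t) := by
      rw [Finset.range_eq_Ico, ← Finset.sum_Ico_consecutive _ (Nat.zero_le ((j:ℕ)+1)) (by omega),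
          Finset.sum_eq_sum_Ico_succ_bot (by omega : (j:ℕ)+1 < m)]
      rw [Finset.range_eq_Ico]
    rw [split1, e1, e2, e3, e4, rhs, hF2, hF3 hc]
    have hd := dstep_le q ((j:ℕ)+1)
    simp only [delta, if_pos hc]
    cases s <;> simp <;> omega
  · have e3 : ∑ t ∈ Finset.Ico ((j:ℕ)+2) (m+1), dstep (Phi (q,j,s)) t = 0 := by
      rw [Finset.Ico_eq_empty (by omega)]; simp
    have rhs : ∑ t ∈ Finset.range m, dstep q t = ∑ t ∈ Finset.range ((j:ℕ)+1), dstep q t := by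
      rw [show Finset.range m = Finset.range ((j:ℕ)+1) by congr 1; omega]
    rw [split1, e1, e2, e3, hF2, rhs]
    simp only [delta, if_neg hc]
    cases s <;> simp

lemma sval_phi_one {m : ℕ} (q : SP m) (j : Fin m) (s : Bool) :
    sval (Phi (q, j, s)) 1 = sval q 1 := by
  have h := sval_phi_lt q j s 1 (by omega) (by omega)
  simpa using h

lemma phi_inj {m : ℕ} {x y : SP m × Fin m × Bool} (h : Phi x = Phi y) : x = y := by
  obtain ⟨q, j, s⟩ := x; obtain ⟨q', j', s'⟩ := y
  have h1 : insPerm j.succ q.1 = insPerm j'.succ q'.1 := congrArg Prod.fst h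
  have h2 : (Phi (q,j,s)).2 = (Phi (q',j',s')).2 := congrArg Prod.snd h
  simp only [Phi] at h2
  have hjj : j.succ = j'.succ := by
    have e1 : insPerm j.succ q.1 j.succ = Fin.last m := insPerm_self _ _
    rw [h1] at e1
    exact (insPerm j'.succ q'.1).injective (e1.trans (insPerm_self _ _).symm)
  have hj : j = j' := Fin.succ_injective _ hjj
  subst hj
  have hq1 : q.1 = q'.1 := by
    refine Equiv.ext (fun i => Fin.castSucc_injective _ ?_)
    calc (q.1 i).castSucc = insPerm j.succ q.1 (j.succ.succAbove i) :=
          (insPerm_succAbove _ _ _).symm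
      _ = insPerm j.succ q'.1 (j.succ.succAbove i) := by rw [h1]
      _ = (q'.1 i).castSucc := insPerm_succAbove _ _ _
  have hq2 : q.2 = q'.2 := by
    funext i
    calc q.2 i = (j.succ).insertNth (α := fun _ => Bool) s q.2 (j.succ.succAbove i) :=
          (Fin.insertNth_apply_succAbove (α := fun _ => Bool) j.succ s q.2 i).symm
      _ = (j.succ).insertNth (α := fun _ => Bool) s' q'.2 (j.succ.succAbove i) := by rw [h2]
      _ = q'.2 i := Fin.insertNth_apply_succAbove (α := fun _ => Bool) j.succ s' q'.2 i
  have hs : s = s' := by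
    calc s = (j.succ).insertNth (α := fun _ => Bool) s q.2 j.succ :=
          (Fin.insertNth_apply_same (α := fun _ => Bool) j.succ s q.2).symm
      _ = (j.succ).insertNth (α := fun _ => Bool) s' q'.2 j.succ := by rw [h2]
      _ = s' := Fin.insertNth_apply_same (α := fun _ => Bool) j.succ s' q'.2
  have : q = q' := Prod.ext hq1 hq2
  rw [this, hs]

lemma phi_surj {m : ℕ} (P : SP (m+1)) (h0 : P.1 0 ≠ Fin.last m) :
    ∃ x : SP m × Fin m × Bool, Phi x = P := by
  obtain ⟨τ, ε⟩ := P
  simp only at h0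
  set p : Fin (m+1) := τ.symm (Fin.last m) with hp
  have hτp : τ p = Fin.last m := Equiv.apply_symm_apply τ _
  have hp0 : p ≠ 0 := by
    intro h
    rw [h] at hτp
    exact h0 hτp
  set j : Fin m := p.pred hp0 with hj
  have hjs : j.succ = p := Fin.succ_pred p hp0
  set e : Option (Fin m) ≃ Option (Fin m) :=
    ((finSuccEquiv' p).symm.trans τ).trans (finSuccEquiv' (Fin.last m)) with he
  have henone : e none = none := by
    simp only [he, Equiv.trans_apply, finSuccEquiv'_symm_none]
    rw [show τ p = Fin.last m from hτp, finSuccEquiv'_at]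
  set σ : Equiv.Perm (Fin m) := e.removeNone with hσ
  have hsome : ∀ i, e (some i) = some (σ i) := by
    intro i
    have hne : e (some i) ≠ none := by
      intro hnone
      have := e.injective (hnone.trans henone.symm)
      simp at this
    obtain ⟨v, hv⟩ := Option.ne_none_iff_exists'.mp hne
    rw [hσ, (Equiv.removeNone_some e ⟨v, hv⟩).symm]
  have hτa : ∀ i, τ (p.succAbove i) = (σ i).castSucc := by
    intro i
    have h1 := hsome i
    simp only [he, Equiv.trans_apply, finSuccEquiv'_symm_some] at h1
    have h2 : τ (p.succAbove i) = (finSuccEquiv' (Fin.last m)).symm (some (σ i)) := by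
      rw [← h1, Equiv.symm_apply_apply]
    rw [h2, finSuccEquiv'_symm_some, Fin.succAbove_last]
  refine ⟨((σ, fun i => ε (p.succAbove i)), j, ε p), ?_⟩
  unfold Phi
  simp only [hjs]
  refine Prod.ext ?_ ?_
  · refine Equiv.ext (fun x => ?_)
    rcases eq_or_ne x p with rfl | hne
    · rw [insPerm_self, hτp]
    · obtain ⟨i, rfl⟩ := Fin.exists_succAbove_eq hne
      rw [insPerm_succAbove, hτa i]
  · funext x
    show p.insertNth (α := fun _ => Bool) (ε p) (fun i => ε (p.succAbove i)) x = ε x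
    rcases eq_or_ne x p with rfl | hne
    · exact Fin.insertNth_apply_same (α := fun _ => Bool) p (ε p) _
    · obtain ⟨i, rfl⟩ := Fin.exists_succAbove_eq hne
      exact Fin.insertNth_apply_succAbove (α := fun _ => Bool) p (ε p) _ i

lemma delta_le {m : ℕ} (q : SP m) (j : Fin m) (s : Bool) : delta q j s ≤ 1 := by
  unfold delta; split_ifs <;> omega

lemma dstep_zero {m : ℕ} (q : SP m) (h0 : 0 < sval q 1) : dstep q 0 = 0 := by
  unfold dstep
  rw [if_neg]
  push_cast
  rw [sval_zero]
  omega

lemma countA {m : ℕ} (q : SP m) (hm : 0 < m) (h0 : 0 < sval q 1) :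
    (Finset.univ.filter (fun y : Fin m × Bool => delta q y.1 y.2 = 0)).card
      = 2 * desB q + 1 := by
  rw [Finset.card_filter, Fintype.sum_prod_type]
  have inner : ∀ j : Fin m, (∑ s : Bool, if delta q j s = 0 then 1 else 0)
      = (if (j:ℕ)+2 ≤ m then 2 * dstep q ((j:ℕ)+1) else 1) := by
    intro j
    rw [Fintype.sum_bool]
    by_cases hc : (j:ℕ)+2 ≤ m
    · simp only [delta, if_pos hc]
      have := dstep_le q ((j:ℕ)+1)
      split_ifs <;> omega
    · simp only [delta, if_neg hc]
      norm_num
  simp_rw [inner]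
  rw [Fin.sum_univ_eq_sum_range (fun t => if t+2 ≤ m then 2*dstep q (t+1) else 1) m]
  rw [show Finset.range m = Finset.range ((m-1)+1) by congr 1; omega, Finset.sum_range_succ]
  rw [if_neg (by omega)]
  rw [Finset.sum_congr rfl
    (fun t ht => if_pos (by simp only [Finset.mem_range] at ht; omega))]
  rw [desB_eq_sum' q, show Finset.range m = Finset.range ((m-1)+1) by congr 1; omega,
      Finset.sum_range_succ', dstep_zero q h0, ← Finset.mul_sum]
  omega

lemma countAB {m : ℕ} (q : SP m) :
    (Finset.univ.filter (fun y : Fin m × Bool => delta q y.1 y.2 = 0)).card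
      + (Finset.univ.filter (fun y : Fin m × Bool => delta q y.1 y.2 = 1)).card = 2 * m := by
  have h1 := Finset.card_filter_add_card_filter_not
    (s := (Finset.univ : Finset (Fin m × Bool))) (p := fun y => delta q y.1 y.2 = 0)
  have h2 : Finset.univ.filter (fun y : Fin m × Bool => ¬ (delta q y.1 y.2 = 0))
      = Finset.univ.filter (fun y : Fin m × Bool => delta q y.1 y.2 = 1) := by
    apply Finset.filter_congr
    intro y _
    have := delta_le q y.1 y.2
    constructor <;> intro <;> omega
  rw [h2] at h1
  rw [h1]
  simp [Fintype.card_prod, mul_comm]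

lemma fiber_count {m : ℕ} (q : SP m) (d : ℕ) (hm : 0 < m) (h0 : 0 < sval q 1) :
    (∑ y : Fin m × Bool, if desB q + delta q y.1 y.2 = d then (1:ℤ) else 0)
      = (if desB q = d then 2*(d:ℤ)+1 else 0)
        + (if desB q + 1 = d then 2*(m:ℤ)-(2*(d:ℤ)-1) else 0) := by
  have hcard : ∀ c : ℕ, (∑ y : Fin m × Bool, if delta q y.1 y.2 = c then (1:ℤ) else 0)
      = ((Finset.univ.filter (fun y : Fin m × Bool => delta q y.1 y.2 = c)).card : ℤ) := by
    intro c
    rw [Finset.card_filter]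
    push_cast
    rfl
  by_cases h1 : desB q = d
  · have he : ∀ y : Fin m × Bool, (desB q + delta q y.1 y.2 = d) = (delta q y.1 y.2 = 0) := by
      intro y; apply propext; omega
    simp_rw [he]
    rw [hcard 0, countA q hm h0, if_pos h1, if_neg (by omega)]
    push_cast
    omega
  · by_cases h2 : desB q + 1 = d
    · have he : ∀ y : Fin m × Bool, (desB q + delta q y.1 y.2 = d) = (delta q y.1 y.2 = 1) := by
        intro y; apply propext; omega
      simp_rw [he]
      rw [hcard 1, if_neg h1, if_pos h2]
      have hA := countA q hm h0
      have hAB := countAB q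
      push_cast
      omega
    · have he : ∀ y : Fin m × Bool, (desB q + delta q y.1 y.2 = d) = False := by
        intro y
        have := delta_le q y.1 y.2
        apply propext
        constructor
        · intro hh; omega
        · intro hh; exact hh.elim
      simp_rw [he]
      rw [if_neg h1, if_neg h2]
      simp

lemma first_ne_last {m : ℕ} (P : SP (m+1)) (k : ℕ) (hk1 : 1 ≤ k) (hk2 : k ≤ m)
    (h : sval P 1 = (k:ℤ)) : P.1 0 ≠ Fin.last m := by
  have h1 := sval_nat P 1 0 le_rfl (by simp)
  rw [show ((1:ℕ):ℤ) = 1 by norm_cast, h] at h1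
  intro hlast
  rw [hlast] at h1
  simp only [Fin.val_last] at h1
  cases hb : P.2 0 <;> rw [hb] at h1 <;> simp at h1 <;> omega

lemma card_eq {m d k : ℕ} (hk1 : 1 ≤ k) (hk2 : k ≤ m) :
    Bcount (m+1) d (k:ℤ)
      = (Finset.univ.filter (fun x : SP m × Fin m × Bool =>
          (desB x.1 + delta x.1 x.2.1 x.2.2 = d) ∧ sval x.1 1 = (k:ℤ))).card := by
  rw [Bcount]
  symm
  refine Finset.card_bij (fun x _ => Phi x) ?_ ?_ ?_
  · rintro ⟨q, j, s⟩ hx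
    simp only [Finset.mem_filter, Finset.mem_univ, true_and] at hx ⊢
    exact ⟨by rw [desB_phi]; exact hx.1, by rw [sval_phi_one]; exact hx.2⟩
  · intro x hx y hy hxy
    exact phi_inj hxy
  · intro P hP
    simp only [Finset.mem_filter, Finset.mem_univ, true_and] at hP
    obtain ⟨x, hx⟩ := phi_surj P (first_ne_last P k hk1 hk2 hP.2)
    obtain ⟨q, j, s⟩ := x
    refine ⟨(q, j, s), ?_, hx⟩
    simp only [Finset.mem_filter, Finset.mem_univ, true_and]
    constructor
    · rw [← hP.1, ← hx, desB_phi]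
    · rw [← hP.2, ← hx, sval_phi_one]

lemma main_rec {m d k : ℕ} (hm : 0 < m) (hk1 : 1 ≤ k) (hk2 : k ≤ m) :
    (Bcount (m+1) d (k:ℤ) : ℤ) = (2*(d:ℤ)+1) * (Bcount m d (k:ℤ) : ℤ) +
      (2*((m:ℤ) - (d:ℤ)) + 1) * (if d = 0 then 0 else (Bcount m (d-1) (k:ℤ) : ℤ)) := by
  rw [card_eq hk1 hk2]
  rw [Finset.card_filter]
  push_cast
  rw [Fintype.sum_prod_type]
  have step1 : ∀ q : SP m, (∑ y : Fin m × Bool,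
      if (desB q + delta q y.1 y.2 = d) ∧ sval q 1 = (k:ℤ) then (1:ℤ) else 0)
      = (if sval q 1 = (k:ℤ) then
          ((if desB q = d then 2*(d:ℤ)+1 else 0)
            + (if desB q + 1 = d then 2*(m:ℤ)-(2*(d:ℤ)-1) else 0)) else 0) := by
    intro q
    by_cases hq : sval q 1 = (k:ℤ)
    · rw [if_pos hq]
      have h0 : 0 < sval q 1 := by rw [hq]; exact_mod_cast hk1
      rw [← fiber_count q d hm h0]
      refine Finset.sum_congr rfl (fun y _ => ?_)
      simp [hq]
    · rw [if_neg hq]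
      refine Finset.sum_eq_zero (fun y _ => ?_)
      rw [if_neg (by tauto)]
  rw [Finset.sum_congr rfl (fun q _ => step1 q)]
  have hB1 : ((Bcount m d (k:ℤ) : ℕ) : ℤ)
      = ∑ q : SP m, (if desB q = d ∧ sval q 1 = (k:ℤ) then (1:ℤ) else 0) := by
    rw [Bcount, Finset.card_filter]; push_cast; rfl
  have hB2 : (if d = 0 then 0 else ((Bcount m (d-1) (k:ℤ) : ℕ) : ℤ))
      = ∑ q : SP m, (if desB q + 1 = d ∧ sval q 1 = (k:ℤ) then (1:ℤ) else 0) := by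
    by_cases hd : d = 0
    · rw [if_pos hd]
      symm
      refine Finset.sum_eq_zero (fun q _ => ?_)
      rw [if_neg]
      rintro ⟨ha, _⟩
      omega
    · rw [if_neg hd, Bcount, Finset.card_filter]
      push_cast
      refine Finset.sum_congr rfl (fun q _ => ?_)
      refine if_congr ?_ rfl rfl
      constructor <;> rintro ⟨ha, hb⟩ <;> exact ⟨by omega, hb⟩
  rw [hB1, hB2, Finset.mul_sum, Finset.mul_sum, ← Finset.sum_add_distrib]
  refine Finset.sum_congr rfl (fun q _ => ?_)
  by_cases h1 : sval q 1 = (k:ℤ) <;>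
    by_cases h2 : desB q = d <;>
      by_cases h3 : desB q + 1 = d <;>
        simp [h1, h2, h3] <;> ring


/-- For `n ≥ 2`, `0 ≤ d ≤ n`, `1 ≤ k ≤ n-1`:
`B_{n,d,k} = (2d+1)·B_{n-1,d,k} + (2(n-d-1)+1)·B_{n-1,d-1,k}`,
with the convention `B_{n-1,-1,k} = 0` (the `if d = 0` clause). -/
theorem stmt12 (n d k : ℕ) (hn : 2 ≤ n) (hd : d ≤ n) (hk1 : 1 ≤ k) (hk2 : k ≤ n - 1) :
    (Bcount n d (k : ℤ) : ℤ) =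
      (2 * (d : ℤ) + 1) * (Bcount (n - 1) d (k : ℤ) : ℤ) +
        (2 * ((n : ℤ) - (d : ℤ) - 1) + 1) *
          (if d = 0 then 0 else (Bcount (n - 1) (d - 1) (k : ℤ) : ℤ)) := by
  obtain ⟨m, rfl⟩ : ∃ m, n = m + 1 := ⟨n - 1, by omega⟩
  have hm : 0 < m := by omega
  have hk2' : k ≤ m := by omega
  rw [show m + 1 - 1 = m from rfl, main_rec hm hk1 hk2']
  push_cast
  ring
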